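/- Let $(R,\xi)$ be a pre-bialgebra with cocycle in ${}^H_H\mathcal{YD}$ and $A = R\#_\xi H$ the associated bialgebra, with $\sigma(h) = 1_R \# h$. Let $\phi : A \otimes A \to K$ be $H$-bilinear and $H$-balanced. Then for all $r,s,t \in R$ and $h \in H$: (a) $\phi(r\#1 \otimes (s\#1)(t\#1)) = \phi(r\#1 \otimes st\#1)$; (b) $\phi(r\#h \otimes s\#1) = \phi(r\#1 \otimes (h\cdot s)\#1)$; (c) $\phi((h\cdot r)\#1 \otimes s\#1) = \phi(r\#1 \otimes (S(h)\cdot s)\#1)$. -/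

import Mathlib

set_option maxHeartbeats 1000000
open TensorProduct

section Defs

variable {K H R : Type*} [CommRing K] [Ring H] [HopfAlgebra K H]
  [AddCommGroup R] [Module K R] [Coalgebra K R]

/-- The Yetter-Drinfeld braiding `c(v ⊗ w) = v₍₋₁₎ · w ⊗ v₍₀₎` on `R ⊗ R`. -/
noncomputable def braidRR (act : (H ⊗[K] R) →ₗ[K] R) (ρ : R →ₗ[K] H ⊗[K] R) :
    (R ⊗[K] R) →ₗ[K] R ⊗[K] R :=
  (TensorProduct.map act LinearMap.id) ∘ₗ
  (TensorProduct.assoc K H R R).symm.toLinearMap ∘ₗ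
  (TensorProduct.map LinearMap.id (TensorProduct.comm K R R).toLinearMap) ∘ₗ
  (TensorProduct.assoc K H R R).toLinearMap ∘ₗ
  (TensorProduct.map ρ LinearMap.id)

/-- Apply `f : R ⊗ R → R ⊗ R` to the middle tensorands of `(R ⊗ R) ⊗ (R ⊗ R)`. -/
noncomputable def midMap (f : (R ⊗[K] R) →ₗ[K] R ⊗[K] R) :
    ((R ⊗[K] R) ⊗[K] (R ⊗[K] R)) →ₗ[K] (R ⊗[K] R) ⊗[K] (R ⊗[K] R) :=
  (TensorProduct.assoc K R R (R ⊗[K] R)).symm.toLinearMap ∘ₗ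
  (TensorProduct.map LinearMap.id (TensorProduct.assoc K R R R).toLinearMap) ∘ₗ
  (TensorProduct.map LinearMap.id (TensorProduct.map f LinearMap.id)) ∘ₗ
  (TensorProduct.map LinearMap.id (TensorProduct.assoc K R R R).symm.toLinearMap) ∘ₗ
  (TensorProduct.assoc K R R (R ⊗[K] R)).toLinearMap

/-- The comultiplication `Δ_{R⊗R} = (id ⊗ c ⊗ id)(Δ_R ⊗ Δ_R)` of the coalgebra
`R ⊗ R` in `{}^H_H 𝒴𝒟`. -/
noncomputable def comulRR (act : (H ⊗[K] R) →ₗ[K] R) (ρ : R →ₗ[K] H ⊗[K] R) :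
    (R ⊗[K] R) →ₗ[K] (R ⊗[K] R) ⊗[K] (R ⊗[K] R) :=
  midMap (braidRR act ρ) ∘ₗ (TensorProduct.map Coalgebra.comul Coalgebra.comul)

/-- The diagonal action `h · (r ⊗ s) = h₁·r ⊗ h₂·s` of `H` on `R ⊗ R`. -/
noncomputable def actRR (act : (H ⊗[K] R) →ₗ[K] R) :
    (H ⊗[K] (R ⊗[K] R)) →ₗ[K] R ⊗[K] R :=
  (TensorProduct.map act act) ∘ₗ
  (TensorProduct.tensorTensorTensorComm K H H R R).toLinearMap ∘ₗ
  (TensorProduct.map Coalgebra.comul LinearMap.id)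

/-- The diagonal coaction `ρ(r ⊗ s) = r₍₋₁₎s₍₋₁₎ ⊗ (r₍₀₎ ⊗ s₍₀₎)` of `H` on `R ⊗ R`. -/
noncomputable def coactRR (ρ : R →ₗ[K] H ⊗[K] R) :
    (R ⊗[K] R) →ₗ[K] H ⊗[K] (R ⊗[K] R) :=
  (TensorProduct.map (LinearMap.mul' K H) LinearMap.id) ∘ₗ
  (TensorProduct.tensorTensorTensorComm K H R H R).toLinearMap ∘ₗ
  (TensorProduct.map ρ ρ)

/-- The braiding-type map `c_{H,R}(h ⊗ s) = h₁·s ⊗ h₂`. -/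
noncomputable def cHR (act : (H ⊗[K] R) →ₗ[K] R) : (H ⊗[K] R) →ₗ[K] R ⊗[K] H :=
  (TensorProduct.comm K H R).toLinearMap ∘ₗ
  (TensorProduct.map LinearMap.id act) ∘ₗ
  (TensorProduct.assoc K H H R).toLinearMap ∘ₗ
  (TensorProduct.map (TensorProduct.comm K H H).toLinearMap LinearMap.id) ∘ₗ
  (TensorProduct.map Coalgebra.comul LinearMap.id)

/-- The left adjoint action `h ⇀ x = h₁ x S(h₂)` of `H` on itself. -/
noncomputable def adjH : (H ⊗[K] H) →ₗ[K] H :=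
  (LinearMap.mul' K H) ∘ₗ
  (TensorProduct.map LinearMap.id (LinearMap.mul' K H)) ∘ₗ
  (TensorProduct.map LinearMap.id (TensorProduct.comm K H H).toLinearMap) ∘ₗ
  (TensorProduct.assoc K H H H).toLinearMap ∘ₗ
  (TensorProduct.map (TensorProduct.map LinearMap.id (HopfAlgebra.antipode (R := K)))
    LinearMap.id) ∘ₗ
  (TensorProduct.map Coalgebra.comul LinearMap.id)

/-- The braiding `c_{R,H}(r ⊗ h) = (r₍₋₁₎ ⇀ h) ⊗ r₍₀₎`, where `H` carries the
adjoint action. -/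
noncomputable def cRH (ρ : R →ₗ[K] H ⊗[K] R) : (R ⊗[K] H) →ₗ[K] H ⊗[K] R :=
  (TensorProduct.map adjH LinearMap.id) ∘ₗ
  (TensorProduct.assoc K H H R).symm.toLinearMap ∘ₗ
  (TensorProduct.map LinearMap.id (TensorProduct.comm K R H).toLinearMap) ∘ₗ
  (TensorProduct.assoc K H R H).toLinearMap ∘ₗ
  (TensorProduct.map ρ LinearMap.id)

/-- `Φ(ξ)` on `(R ⊗ R) ⊗ H`: `z ⊗ h ↦ z₁ ⊗ ξ(z₂)h`. -/
noncomputable def PhiXiH (act : (H ⊗[K] R) →ₗ[K] R) (ρ : R →ₗ[K] H ⊗[K] R)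
    (ξ : (R ⊗[K] R) →ₗ[K] H) : ((R ⊗[K] R) ⊗[K] H) →ₗ[K] (R ⊗[K] R) ⊗[K] H :=
  (TensorProduct.map LinearMap.id (LinearMap.mul' K H)) ∘ₗ
  (TensorProduct.map LinearMap.id (TensorProduct.map ξ LinearMap.id)) ∘ₗ
  (TensorProduct.assoc K (R ⊗[K] R) (R ⊗[K] R) H).toLinearMap ∘ₗ
  (TensorProduct.map (comulRR act ρ) LinearMap.id)

/-- `Φ(ξ)` on `(R ⊗ R) ⊗ R`: `z ⊗ t ↦ z₁ ⊗ ξ(z₂)·t`. -/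
noncomputable def PhiXiR (act : (H ⊗[K] R) →ₗ[K] R) (ρ : R →ₗ[K] H ⊗[K] R)
    (ξ : (R ⊗[K] R) →ₗ[K] H) : ((R ⊗[K] R) ⊗[K] R) →ₗ[K] (R ⊗[K] R) ⊗[K] R :=
  (TensorProduct.map LinearMap.id act) ∘ₗ
  (TensorProduct.map LinearMap.id (TensorProduct.map ξ LinearMap.id)) ∘ₗ
  (TensorProduct.assoc K (R ⊗[K] R) (R ⊗[K] R) R).toLinearMap ∘ₗ
  (TensorProduct.map (comulRR act ρ) LinearMap.id)

/-- The multiplication of the smash product `A = R #_ξ H`. -/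
noncomputable def mulA (act : (H ⊗[K] R) →ₗ[K] R) (ρ : R →ₗ[K] H ⊗[K] R)
    (mR : (R ⊗[K] R) →ₗ[K] R) (ξ : (R ⊗[K] R) →ₗ[K] H) :
    ((R ⊗[K] H) ⊗[K] (R ⊗[K] H)) →ₗ[K] R ⊗[K] H :=
  (TensorProduct.map mR (LinearMap.mul' K H)) ∘ₗ
  (TensorProduct.assoc K (R ⊗[K] R) H H).toLinearMap ∘ₗ
  (TensorProduct.map (PhiXiH act ρ ξ) LinearMap.id) ∘ₗ
  (TensorProduct.map (TensorProduct.assoc K R R H).symm.toLinearMap LinearMap.id) ∘ₗ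
  (TensorProduct.map (TensorProduct.map LinearMap.id (cHR act)) LinearMap.id) ∘ₗ
  (TensorProduct.map (TensorProduct.assoc K R H R).toLinearMap LinearMap.id) ∘ₗ
  (TensorProduct.assoc K (R ⊗[K] H) R H).symm.toLinearMap

/-- The smash coproduct `Δ_A(r # h) = r¹ # r²₍₋₁₎h₁ ⊗ r²₍₀₎ # h₂` of `A = R #_ξ H`. -/
noncomputable def comulA (ρ : R →ₗ[K] H ⊗[K] R) :
    (R ⊗[K] H) →ₗ[K] (R ⊗[K] H) ⊗[K] (R ⊗[K] H) :=
  (TensorProduct.assoc K R H (R ⊗[K] H)).symm.toLinearMap ∘ₗ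
  (TensorProduct.map LinearMap.id
    ((TensorProduct.map (LinearMap.mul' K H) LinearMap.id) ∘ₗ
      (TensorProduct.tensorTensorTensorComm K H R H H).toLinearMap)) ∘ₗ
  (TensorProduct.assoc K R (H ⊗[K] R) (H ⊗[K] H)).toLinearMap ∘ₗ
  (TensorProduct.map (TensorProduct.map LinearMap.id ρ) LinearMap.id) ∘ₗ
  (TensorProduct.map Coalgebra.comul Coalgebra.comul)

/-- The canonical injection `σ : H → R #_ξ H`, `σ(h) = 1_R # h`. -/
noncomputable def sigmaA (one : R) : H →ₗ[K] R ⊗[K] H := TensorProduct.mk K R H one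

/-- A pre-bialgebra with cocycle `(R, ξ)` in `{}^H_H 𝒴𝒟` (Ardizzoni–Menini–Ştefan). -/
structure PreBialgebraWithCocycle (K H R : Type*) [CommRing K] [Ring H]
    [HopfAlgebra K H] [AddCommGroup R] [Module K R] [Coalgebra K R] where
  /-- the left `H`-action on `R` -/
  act : (H ⊗[K] R) →ₗ[K] R
  /-- the left `H`-coaction on `R` -/
  ρ : R →ₗ[K] H ⊗[K] R
  /-- the coaugmentation `1_R` -/
  one : R
  /-- the multiplication of `R` -/
  mR : (R ⊗[K] R) →ₗ[K] R
  /-- the cocycle `ξ : R ⊗ R → H` -/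
  ξ : (R ⊗[K] R) →ₗ[K] H
  act_one : ∀ z : R, act ((1 : H) ⊗ₜ[K] z) = z
  act_mul : ∀ (g h : H) (z : R), act ((g * h) ⊗ₜ[K] z) = act (g ⊗ₜ[K] act (h ⊗ₜ[K] z))
  coact_counit : (TensorProduct.lid K R).toLinearMap ∘ₗ
    (TensorProduct.map Coalgebra.counit LinearMap.id) ∘ₗ ρ = LinearMap.id
  coact_coassoc : (TensorProduct.map Coalgebra.comul LinearMap.id) ∘ₗ ρ =
    (TensorProduct.assoc K H H R).symm.toLinearMap ∘ₗ
      (TensorProduct.map LinearMap.id ρ) ∘ₗ ρ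
  /-- the Yetter-Drinfeld compatibility, in the equivalent form
  `h₁ z₍₋₁₎ ⊗ h₂ · z₍₀₎ = (h₁ · z)₍₋₁₎ h₂ ⊗ (h₁ · z)₍₀₎` -/
  yd : (TensorProduct.map (LinearMap.mul' K H) act) ∘ₗ
      (TensorProduct.tensorTensorTensorComm K H H H R).toLinearMap ∘ₗ
      (TensorProduct.map Coalgebra.comul ρ) =
    (TensorProduct.map ((LinearMap.mul' K H) ∘ₗ (TensorProduct.comm K H H).toLinearMap)
        LinearMap.id) ∘ₗ
      (TensorProduct.assoc K H H R).symm.toLinearMap ∘ₗ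
      (TensorProduct.map LinearMap.id ρ) ∘ₗ
      (TensorProduct.map LinearMap.id act) ∘ₗ
      (TensorProduct.assoc K H H R).toLinearMap ∘ₗ
      (TensorProduct.map (TensorProduct.comm K H H).toLinearMap LinearMap.id) ∘ₗ
      (TensorProduct.map Coalgebra.comul LinearMap.id)
  comul_act : (Coalgebra.comul (R := K) (A := R)) ∘ₗ act =
    (TensorProduct.map act act) ∘ₗ
      (TensorProduct.tensorTensorTensorComm K H H R R).toLinearMap ∘ₗ
      (TensorProduct.map Coalgebra.comul Coalgebra.comul)
  counit_act : ∀ (h : H) (z : R), Coalgebra.counit (R := K) (act (h ⊗ₜ[K] z)) =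
    Coalgebra.counit (R := K) h * Coalgebra.counit (R := K) z
  comod_coalg_comul : (TensorProduct.map LinearMap.id Coalgebra.comul) ∘ₗ ρ =
    (TensorProduct.map (LinearMap.mul' K H) LinearMap.id) ∘ₗ
      (TensorProduct.tensorTensorTensorComm K H R H R).toLinearMap ∘ₗ
      (TensorProduct.map ρ ρ) ∘ₗ Coalgebra.comul
  comod_coalg_counit : (TensorProduct.rid K H).toLinearMap ∘ₗ
      (TensorProduct.map LinearMap.id Coalgebra.counit) ∘ₗ ρ =
    (Algebra.linearMap K H) ∘ₗ Coalgebra.counit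
  one_grouplike : Coalgebra.comul (R := K) one = one ⊗ₜ[K] one
  counit_one : Coalgebra.counit (R := K) one = 1
  act_on_one : ∀ h : H, act (h ⊗ₜ[K] one) = Coalgebra.counit (R := K) h • one
  coact_one : ρ one = (1 : H) ⊗ₜ[K] one
  mR_one_left : ∀ r : R, mR (one ⊗ₜ[K] r) = r
  mR_one_right : ∀ r : R, mR (r ⊗ₜ[K] one) = r
  mR_hlinear : mR ∘ₗ actRR act = act ∘ₗ (TensorProduct.map LinearMap.id mR)
  mR_coalg : (Coalgebra.comul (R := K) (A := R)) ∘ₗ mR =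
    (TensorProduct.map mR mR) ∘ₗ comulRR act ρ
  counit_mR : ∀ r s : R, Coalgebra.counit (R := K) (mR (r ⊗ₜ[K] s)) =
    Coalgebra.counit (R := K) r * Coalgebra.counit (R := K) s
  xi_hlinear : ξ ∘ₗ actRR act = adjH ∘ₗ (TensorProduct.map LinearMap.id ξ)
  xi_cocycle : (Coalgebra.comul (R := K) (A := H)) ∘ₗ ξ =
    (TensorProduct.map (LinearMap.mul' K H) ξ) ∘ₗ
      (TensorProduct.assoc K H H (R ⊗[K] R)).symm.toLinearMap ∘ₗ
      (TensorProduct.map ξ (coactRR ρ)) ∘ₗ comulRR act ρ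
  xi_normal : ∀ r s : R, Coalgebra.counit (R := K) (ξ (r ⊗ₜ[K] s)) =
    Coalgebra.counit (R := K) r * Coalgebra.counit (R := K) s
  xi_one_left : ∀ r : R, ξ (one ⊗ₜ[K] r) = Coalgebra.counit (R := K) r • (1 : H)
  xi_one_right : ∀ r : R, ξ (r ⊗ₜ[K] one) = Coalgebra.counit (R := K) r • (1 : H)
  yd6 : (cRH ρ) ∘ₗ (TensorProduct.map mR ξ) ∘ₗ comulRR act ρ =
    (TensorProduct.map (LinearMap.mul' K H) mR) ∘ₗ
      (TensorProduct.assoc K H H (R ⊗[K] R)).symm.toLinearMap ∘ₗ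
      (TensorProduct.map ξ (coactRR ρ)) ∘ₗ comulRR act ρ
  yd7 : mR ∘ₗ (TensorProduct.map LinearMap.id mR) ∘ₗ
      (TensorProduct.assoc K R R R).toLinearMap =
    mR ∘ₗ (TensorProduct.map mR LinearMap.id) ∘ₗ PhiXiR act ρ ξ
  yd8 : (LinearMap.mul' K H) ∘ₗ (TensorProduct.map ξ LinearMap.id) ∘ₗ
      (TensorProduct.assoc K R R H).symm.toLinearMap ∘ₗ
      (TensorProduct.map LinearMap.id ((TensorProduct.map mR ξ) ∘ₗ comulRR act ρ)) =
    (LinearMap.mul' K H) ∘ₗ (TensorProduct.map ξ LinearMap.id) ∘ₗ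
      (TensorProduct.assoc K R R H).symm.toLinearMap ∘ₗ
      (TensorProduct.map LinearMap.id (cHR act)) ∘ₗ
      (TensorProduct.assoc K R H R).toLinearMap ∘ₗ
      (TensorProduct.map ((TensorProduct.map mR ξ) ∘ₗ comulRR act ρ) LinearMap.id) ∘ₗ
      (TensorProduct.assoc K R R R).symm.toLinearMap

end Defs

/-
Taking `h = 1` in `H`-bilinearity gives `φ(y ⊗ r#h) = ε(h) φ(y ⊗ r#1)`: the right argument of `φ`
may be replaced by its slice `(id ⊗ ε)`. The slice of `(s#1)(t#1)` is `st`, by the normalization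
of `ξ` and counitality of `Δ_{R⊗R}`; this is (a). For (b), write `r#h = (r#1)σ(h)`, move `σ(h)`
across by balancedness and use `σ(h)(s#1) = h₁·s # h₂`, whose slice is `h·s`. For (c), write
`(h·r)#1 = σ(h₁)(r#1)σ(S(h₂))`, move `σ(S(h₂))` across, absorb `σ(h₁)` on the left by
bilinearity, and conclude with (b) and counitality.
-/

section Slice

variable {K M N : Type*} [CommRing K] [AddCommGroup M] [Module K M] [AddCommGroup N] [Module K N]

noncomputable def sliceRight (f : N →ₗ[K] K) : M ⊗[K] N →ₗ[K] M :=
  (TensorProduct.rid K M).toLinearMap ∘ₗ f.lTensor M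

@[simp]
lemma sliceRight_tmul (f : N →ₗ[K] K) (m : M) (n : N) : sliceRight f (m ⊗ₜ n) = f n • m := by
  simp [sliceRight]

lemma sliceRight_rTensor {P : Type*} [AddCommGroup P] [Module K P] (f : N →ₗ[K] K)
    (g : M →ₗ[K] P) (x : M ⊗[K] N) : sliceRight f (g.rTensor N x) = g (sliceRight f x) := by
  induction x using TensorProduct.induction_on with
  | zero => simp
  | tmul m n => simp
  | add x y hx hy => simp [hx, hy]

lemma sliceRight_map {P Q : Type*} [AddCommGroup P] [Module K P] [AddCommGroup Q] [Module K Q]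
    (f : N →ₗ[K] K) (g : Q →ₗ[K] M) (k : P →ₗ[K] N) (x : Q ⊗[K] P) :
    sliceRight f (map g k x) = g (sliceRight (f ∘ₗ k) x) := by
  induction x using TensorProduct.induction_on with
  | zero => simp
  | tmul q p => simp
  | add x y hx hy => simp [hx, hy]

@[simp]
lemma sliceRight_counit_comul {C : Type*} [AddCommGroup C] [Module K C] [Coalgebra K C] (c : C) :
    sliceRight Coalgebra.counit (Coalgebra.comul (R := K) c) = c := by
  simp [sliceRight]

end Slice

section MidMap

variable {K R : Type*} [CommRing K] [AddCommGroup R] [Module K R] [Coalgebra K R]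

lemma sliceRight_midMap (f : R ⊗[K] R →ₗ[K] R ⊗[K] R)
    (hf : ∀ b c : R, sliceRight Coalgebra.counit (f (b ⊗ₜ c)) = Coalgebra.counit (R := K) b • c)
    (x : (R ⊗[K] R) ⊗[K] (R ⊗[K] R)) :
    sliceRight Coalgebra.counit (midMap f x) =
      map (sliceRight Coalgebra.counit) (sliceRight Coalgebra.counit) x := by
  have outer (a d : R) (u : R ⊗[K] R) :
      sliceRight Coalgebra.counit ((TensorProduct.assoc K R R (R ⊗[K] R)).symm
        (a ⊗ₜ TensorProduct.assoc K R R R (u ⊗ₜ d))) =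
      Coalgebra.counit (R := K) d • a ⊗ₜ sliceRight Coalgebra.counit u := by
    induction u using TensorProduct.induction_on with
    | zero => simp
    | tmul b c => simp [smul_smul]
    | add x y hx hy => simp [add_tmul, tmul_add, hx, hy]
  induction x using TensorProduct.induction_on with
  | zero => simp
  | tmul p q =>
    induction p using TensorProduct.induction_on with
    | zero => simp
    | tmul a b =>
      induction q using TensorProduct.induction_on with
      | zero => simp
      | tmul c d => simp [midMap, outer, hf, smul_tmul', smul_smul, mul_comm]
      | add x y hx hy => simp_all [tmul_add]
    | add x y hx hy => simp_all [add_tmul]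
  | add x y hx hy => simp_all

end MidMap

namespace PreBialgebraWithCocycle

variable {K H R : Type*} [CommRing K] [Ring H] [HopfAlgebra K H]
  [AddCommGroup R] [Module K R] [Coalgebra K R] (P : PreBialgebraWithCocycle K H R)

lemma braidRR_tmul (v w : R) :
    braidRR P.act P.ρ (v ⊗ₜ w) = (P.act ∘ₗ (TensorProduct.mk K H R).flip w).rTensor R (P.ρ v) := by
  simp only [braidRR, LinearMap.coe_comp, Function.comp_apply, LinearEquiv.coe_coe,
    TensorProduct.map_tmul, LinearMap.id_coe, id_eq]
  generalize P.ρ v = u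
  induction u using TensorProduct.induction_on with
  | zero => simp
  | tmul g u => simp
  | add x y hx hy => simp [add_tmul, hx, hy]

lemma cHR_tmul (h : H) (s : R) :
    cHR P.act (h ⊗ₜ s) =
      (P.act ∘ₗ (TensorProduct.mk K H R).flip s).rTensor H (Coalgebra.comul h) := by
  simp only [cHR, LinearMap.coe_comp, Function.comp_apply, LinearEquiv.coe_coe,
    TensorProduct.map_tmul, LinearMap.id_coe, id_eq]
  generalize Coalgebra.comul (R := K) h = u
  induction u using TensorProduct.induction_on with
  | zero => simp
  | tmul a b => simp
  | add x y hx hy => simp [add_tmul, hx, hy]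

lemma act_comp_flip_one : P.act ∘ₗ (TensorProduct.mk K H R).flip P.one =
    LinearMap.toSpanSingleton K R P.one ∘ₗ Coalgebra.counit := by
  ext h; simp [P.act_on_one]

lemma braidRR_tmul_one (v : R) : braidRR P.act P.ρ (v ⊗ₜ P.one) = P.one ⊗ₜ v := by
  have hv := LinearMap.congr_fun P.coact_counit v
  simp only [LinearMap.coe_comp, Function.comp_apply, LinearEquiv.coe_coe, LinearMap.id_coe,
    id_eq] at hv
  have hρ : (Coalgebra.counit (R := K) (A := H)).rTensor R (P.ρ v) = 1 ⊗ₜ v :=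
    (TensorProduct.lid K R).injective (by simpa [LinearMap.rTensor] using hv)
  rw [braidRR_tmul, act_comp_flip_one, LinearMap.rTensor_comp_apply, hρ]
  simp

lemma braidRR_one_tmul (w : R) : braidRR P.act P.ρ (P.one ⊗ₜ w) = w ⊗ₜ P.one := by
  simp [braidRR_tmul, P.coact_one, P.act_one]

lemma cHR_tmul_one (h : H) : cHR P.act (h ⊗ₜ P.one) = P.one ⊗ₜ h := by
  simp [cHR_tmul, act_comp_flip_one, LinearMap.rTensor_comp_apply]

lemma cHR_one_tmul (s : R) : cHR P.act ((1 : H) ⊗ₜ s) = s ⊗ₜ (1 : H) := by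
  simp [cHR_tmul, Algebra.TensorProduct.one_def, P.act_one]

lemma sliceRight_cHR (h : H) (s : R) :
    sliceRight Coalgebra.counit (cHR P.act (h ⊗ₜ s)) = P.act (h ⊗ₜ s) := by
  rw [cHR_tmul, sliceRight_rTensor, sliceRight_counit_comul]
  rfl

lemma sliceRight_braidRR (v w : R) :
    sliceRight Coalgebra.counit (braidRR P.act P.ρ (v ⊗ₜ w)) = Coalgebra.counit (R := K) v • w := by
  have hρ := LinearMap.congr_fun P.comod_coalg_counit v
  simp only [LinearMap.coe_comp, Function.comp_apply, LinearEquiv.coe_coe,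
    Algebra.linearMap_apply] at hρ
  rw [braidRR_tmul, sliceRight_rTensor]
  simp [sliceRight, LinearMap.lTensor, hρ, Algebra.algebraMap_eq_smul_one, P.act_one]

lemma comulRR_tmul_one (r : R) :
    comulRR P.act P.ρ (r ⊗ₜ P.one) =
      map ((TensorProduct.mk K R R).flip P.one) ((TensorProduct.mk K R R).flip P.one)
        (Coalgebra.comul r) := by
  simp only [comulRR, LinearMap.coe_comp, Function.comp_apply, map_tmul, P.one_grouplike]
  generalize Coalgebra.comul (R := K) r = u
  induction u using TensorProduct.induction_on with
  | zero => simp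
  | tmul a b => simp [midMap, braidRR_tmul_one]
  | add x y hx hy => simp [add_tmul, hx, hy]

lemma comulRR_one_tmul (s : R) :
    comulRR P.act P.ρ (P.one ⊗ₜ s) =
      map (TensorProduct.mk K R R P.one) (TensorProduct.mk K R R P.one) (Coalgebra.comul s) := by
  simp only [comulRR, LinearMap.coe_comp, Function.comp_apply, map_tmul, P.one_grouplike]
  generalize Coalgebra.comul (R := K) s = u
  induction u using TensorProduct.induction_on with
  | zero => simp
  | tmul a b => simp [midMap, braidRR_one_tmul]
  | add x y hx hy => simp [tmul_add, hx, hy]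

lemma PhiXiH_tmul_one (r : R) (g : H) :
    PhiXiH P.act P.ρ P.ξ ((r ⊗ₜ P.one) ⊗ₜ g) = (r ⊗ₜ P.one) ⊗ₜ g := by
  simp only [PhiXiH, LinearMap.coe_comp, Function.comp_apply, LinearEquiv.coe_coe, map_tmul,
    LinearMap.id_coe, id_eq, comulRR_tmul_one]
  conv_rhs => rw [← sliceRight_counit_comul (K := K) r]
  generalize Coalgebra.comul (R := K) r = u
  induction u using TensorProduct.induction_on with
  | zero => simp
  | tmul a b => simp [P.xi_one_right, smul_tmul']
  | add x y hx hy => simp [add_tmul, hx, hy]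

lemma PhiXiH_one_tmul (s : R) (g : H) :
    PhiXiH P.act P.ρ P.ξ ((P.one ⊗ₜ s) ⊗ₜ g) = (P.one ⊗ₜ s) ⊗ₜ g := by
  simp only [PhiXiH, LinearMap.coe_comp, Function.comp_apply, LinearEquiv.coe_coe, map_tmul,
    LinearMap.id_coe, id_eq, comulRR_one_tmul]
  conv_rhs => rw [← sliceRight_counit_comul (K := K) s]
  generalize Coalgebra.comul (R := K) s = u
  induction u using TensorProduct.induction_on with
  | zero => simp
  | tmul a b => simp [P.xi_one_left, smul_tmul']
  | add x y hx hy => simp [tmul_add, add_tmul, hx, hy]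

lemma mulA_tmul_sigmaA (r : R) (h h' : H) :
    mulA P.act P.ρ P.mR P.ξ ((r ⊗ₜ h) ⊗ₜ sigmaA P.one h') = r ⊗ₜ (h * h') := by
  simp [mulA, sigmaA, cHR_tmul_one, PhiXiH_tmul_one, P.mR_one_right]

lemma mulA_sigmaA_tmul (h : H) (s : R) (h' : H) :
    mulA P.act P.ρ P.mR P.ξ (sigmaA P.one h ⊗ₜ (s ⊗ₜ h')) =
      (LinearMap.mulRight K h').lTensor R (cHR P.act (h ⊗ₜ s)) := by
  simp only [mulA, sigmaA, LinearMap.coe_comp, Function.comp_apply, LinearEquiv.coe_coe,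
    assoc_symm_tmul, map_tmul, assoc_tmul, LinearMap.id_coe, id_eq, TensorProduct.mk_apply]
  generalize cHR P.act (h ⊗ₜ s) = u
  induction u using TensorProduct.induction_on with
  | zero => simp
  | tmul a g => simp [PhiXiH_one_tmul, P.mR_one_left]
  | add x y hx hy => simp [tmul_add, add_tmul, hx, hy]

lemma mulA_tmul_one_tmul_one (s t : R) :
    mulA P.act P.ρ P.mR P.ξ ((s ⊗ₜ (1 : H)) ⊗ₜ (t ⊗ₜ (1 : H))) =
      map P.mR P.ξ (comulRR P.act P.ρ (s ⊗ₜ t)) := by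
  simp only [mulA, PhiXiH, LinearMap.coe_comp, Function.comp_apply, LinearEquiv.coe_coe,
    assoc_symm_tmul, map_tmul, assoc_tmul, LinearMap.id_coe, id_eq, cHR_one_tmul]
  generalize comulRR P.act P.ρ (s ⊗ₜ t) = u
  induction u using TensorProduct.induction_on with
  | zero => simp
  | tmul a b => simp
  | add x y hx hy => simp [add_tmul, hx, hy]

lemma mulA_sigmaA_one_left (x : R ⊗[K] H) : mulA P.act P.ρ P.mR P.ξ (sigmaA P.one 1 ⊗ₜ x) = x := by
  induction x using TensorProduct.induction_on with
  | zero => simp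
  | tmul s h' => simp [mulA_sigmaA_tmul, cHR_one_tmul]
  | add x y hx hy => simp [tmul_add, hx, hy]

lemma mulA_sigmaA_right (x : R ⊗[K] H) (h' : H) :
    mulA P.act P.ρ P.mR P.ξ (x ⊗ₜ sigmaA P.one h') = (LinearMap.mulRight K h').lTensor R x := by
  induction x using TensorProduct.induction_on with
  | zero => simp
  | tmul s h => simp [mulA_tmul_sigmaA]
  | add x y hx hy => simp [add_tmul, hx, hy]

lemma sliceRight_comulRR (z : R ⊗[K] R) :
    sliceRight Coalgebra.counit (comulRR P.act P.ρ z) = z := by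
  induction z using TensorProduct.induction_on with
  | zero => simp
  | tmul s t =>
    simp [comulRR, sliceRight_midMap _ (sliceRight_braidRR P)]
  | add x y hx hy => simp_all

lemma act_tmul_one_eq_sum {h : H} {ι : Type*} (𝓡 : Coalgebra.Repr K h ι) (r : R) :
    P.act (h ⊗ₜ r) ⊗ₜ (1 : H) = ∑ i ∈ 𝓡.index, mulA P.act P.ρ P.mR P.ξ
      (mulA P.act P.ρ P.mR P.ξ (sigmaA P.one (𝓡.left i) ⊗ₜ (r ⊗ₜ 1)) ⊗ₜ
        sigmaA P.one (HopfAlgebra.antipode K (𝓡.right i))) := by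
  set f := P.act ∘ₗ (TensorProduct.mk K H R).flip r
  set Ψ := mulA P.act P.ρ P.mR P.ξ ∘ₗ map
    (mulA P.act P.ρ P.mR P.ξ ∘ₗ (TensorProduct.mk K _ _).flip (r ⊗ₜ 1) ∘ₗ sigmaA P.one)
    (sigmaA P.one ∘ₗ HopfAlgebra.antipode K)
  have hΨ : Ψ = map f (LinearMap.mul' K H ∘ₗ (HopfAlgebra.antipode K).lTensor H) ∘ₗ
      (TensorProduct.assoc K H H H).toLinearMap ∘ₗ (Coalgebra.comul (A := H)).rTensor H := by
    -- both sides send `a ⊗ b` to `a₁·r ⊗ a₂ S(b)`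
    refine TensorProduct.ext' fun a b => ?_
    simp only [Ψ, LinearMap.coe_comp, Function.comp_apply, map_tmul, LinearMap.flip_apply,
      TensorProduct.mk_apply, mulA_sigmaA_tmul, mulA_sigmaA_right, LinearMap.mulRight_one,
      LinearMap.lTensor_id, LinearMap.id_coe, id_eq, cHR_tmul, LinearEquiv.coe_coe,
      LinearMap.rTensor_tmul]
    generalize Coalgebra.comul (R := K) a = u
    induction u using TensorProduct.induction_on with
    | zero => simp
    | tmul c d => simp [f]
    | add x y hx hy => simp [add_tmul, hx, hy]
  calc P.act (h ⊗ₜ r) ⊗ₜ (1 : H)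
      = map f (Algebra.linearMap K H ∘ₗ Coalgebra.counit) (Coalgebra.comul h) := by
        rw [← LinearMap.map_lTensor]; simp [f]
    _ = Ψ (Coalgebra.comul h) := by
        rw [← HopfAlgebra.mul_antipode_lTensor_comul, hΨ]
        simp [LinearMap.comp_assoc]
    _ = _ := by rw [← 𝓡.eq, map_sum]; rfl

lemma counit_comp_ξ : Coalgebra.counit ∘ₗ P.ξ = Coalgebra.counit := by
  refine TensorProduct.ext' fun r s => ?_
  simp [P.xi_normal, mul_comm]

lemma sliceRight_mulA_tmul_one_tmul_one (s t : R) :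
    sliceRight Coalgebra.counit (mulA P.act P.ρ P.mR P.ξ ((s ⊗ₜ (1 : H)) ⊗ₜ (t ⊗ₜ (1 : H)))) =
      P.mR (s ⊗ₜ t) := by
  rw [mulA_tmul_one_tmul_one, sliceRight_map, counit_comp_ξ, sliceRight_comulRR]

def IsHBilinear (φ : (R ⊗[K] H) ⊗[K] (R ⊗[K] H) →ₗ[K] K) : Prop :=
  ∀ (h h' : H) (x y : R ⊗[K] H),
    φ (mulA P.act P.ρ P.mR P.ξ (sigmaA P.one h ⊗ₜ x) ⊗ₜ
        mulA P.act P.ρ P.mR P.ξ (y ⊗ₜ sigmaA P.one h')) =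
      Coalgebra.counit (R := K) h * φ (x ⊗ₜ y) * Coalgebra.counit (R := K) h'

variable {P} {φ : (R ⊗[K] H) ⊗[K] (R ⊗[K] H) →ₗ[K] K}

lemma IsHBilinear.apply_tmul_eq_apply_tmul_sliceRight (hφ : P.IsHBilinear φ) (y x : R ⊗[K] H) :
    φ (y ⊗ₜ x) = φ (y ⊗ₜ (sliceRight Coalgebra.counit x ⊗ₜ 1)) := by
  induction x using TensorProduct.induction_on with
  | zero => simp
  | tmul a g =>
    have h := hφ 1 g y (a ⊗ₜ 1)
    rw [mulA_sigmaA_one_left, mulA_tmul_sigmaA, one_mul] at h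
    simp [h, ← smul_tmul', mul_comm]
  | add x x' hx hx' => simp [tmul_add, add_tmul, hx, hx']

lemma IsHBilinear.apply_mulA_sigmaA_tmul (hφ : P.IsHBilinear φ) (g : H) (x y : R ⊗[K] H) :
    φ (mulA P.act P.ρ P.mR P.ξ (sigmaA P.one g ⊗ₜ x) ⊗ₜ y) =
      Coalgebra.counit (R := K) g * φ (x ⊗ₜ y) := by
  simpa [mulA_sigmaA_right] using hφ g 1 x y

lemma IsHBilinear.apply_tmul_mulA_sigmaA_tmul_one (hφ : P.IsHBilinear φ) (y : R ⊗[K] H) (h : H)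
    (s : R) :
    φ (y ⊗ₜ mulA P.act P.ρ P.mR P.ξ (sigmaA P.one h ⊗ₜ (s ⊗ₜ 1))) =
      φ (y ⊗ₜ (P.act (h ⊗ₜ s) ⊗ₜ 1)) := by
  rw [hφ.apply_tmul_eq_apply_tmul_sliceRight, mulA_sigmaA_tmul]
  simp [sliceRight_cHR]

end PreBialgebraWithCocycle

/-- Let `(R, ξ)` be a pre-bialgebra with cocycle in `{}^H_H 𝒴𝒟`,
`A = R #_ξ H` the associated bialgebra, `σ(h) = 1_R # h`, and let
`φ : A ⊗ A → K` be `H`-bilinear and `H`-balanced.  Then for all `r, s, t ∈ R`,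
`h ∈ H`: (a) `φ(r#1 ⊗ (s#1)(t#1)) = φ(r#1 ⊗ st#1)`;
(b) `φ(r#h ⊗ s#1) = φ(r#1 ⊗ (h·s)#1)`;
(c) `φ((h·r)#1 ⊗ s#1) = φ(r#1 ⊗ (S(h)·s)#1)`. -/
theorem hbilinear_balanced_smash {K H R : Type*} [CommRing K] [Ring H]
    [HopfAlgebra K H] [AddCommGroup R] [Module K R] [Coalgebra K R]
    (P : PreBialgebraWithCocycle K H R)
    (φ : ((R ⊗[K] H) ⊗[K] (R ⊗[K] H)) →ₗ[K] K)
    (hbil : ∀ (h h' : H) (x y : R ⊗[K] H),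
      φ ((mulA P.act P.ρ P.mR P.ξ (sigmaA P.one h ⊗ₜ[K] x)) ⊗ₜ[K]
          (mulA P.act P.ρ P.mR P.ξ (y ⊗ₜ[K] sigmaA P.one h'))) =
        Coalgebra.counit (R := K) h * φ (x ⊗ₜ[K] y) * Coalgebra.counit (R := K) h')
    (hbal : ∀ (h : H) (x y : R ⊗[K] H),
      φ ((mulA P.act P.ρ P.mR P.ξ (x ⊗ₜ[K] sigmaA P.one h)) ⊗ₜ[K] y) =
        φ (x ⊗ₜ[K] mulA P.act P.ρ P.mR P.ξ (sigmaA P.one h ⊗ₜ[K] y))) :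
    (∀ r s t : R,
      φ ((r ⊗ₜ[K] (1 : H)) ⊗ₜ[K]
          mulA P.act P.ρ P.mR P.ξ ((s ⊗ₜ[K] (1 : H)) ⊗ₜ[K] (t ⊗ₜ[K] (1 : H)))) =
        φ ((r ⊗ₜ[K] (1 : H)) ⊗ₜ[K] (P.mR (s ⊗ₜ[K] t) ⊗ₜ[K] (1 : H)))) ∧
    (∀ (r s : R) (h : H),
      φ ((r ⊗ₜ[K] h) ⊗ₜ[K] (s ⊗ₜ[K] (1 : H))) =
        φ ((r ⊗ₜ[K] (1 : H)) ⊗ₜ[K] (P.act (h ⊗ₜ[K] s) ⊗ₜ[K] (1 : H)))) ∧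
    (∀ (r s : R) (h : H),
      φ ((P.act (h ⊗ₜ[K] r) ⊗ₜ[K] (1 : H)) ⊗ₜ[K] (s ⊗ₜ[K] (1 : H))) =
        φ ((r ⊗ₜ[K] (1 : H)) ⊗ₜ[K]
          (P.act ((HopfAlgebra.antipode (R := K) h) ⊗ₜ[K] s) ⊗ₜ[K] (1 : H)))) := by
  have hφ : P.IsHBilinear φ := hbil
  refine ⟨fun r s t => ?_, fun r s h => ?_, fun r s h => ?_⟩
  · rw [hφ.apply_tmul_eq_apply_tmul_sliceRight, P.sliceRight_mulA_tmul_one_tmul_one]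
  · rw [← one_mul h, ← P.mulA_tmul_sigmaA, hbal, hφ.apply_tmul_mulA_sigmaA_tmul_one, one_mul]
  · rw [P.act_tmul_one_eq_sum (Coalgebra.Repr.arbitrary K h), sum_tmul, map_sum]
    simp_rw [hbal, hφ.apply_mulA_sigmaA_tmul, hφ.apply_tmul_mulA_sigmaA_tmul_one]
    conv_rhs => rw [← Coalgebra.sum_counit_smul (Coalgebra.Repr.arbitrary K h)]
    simp [sum_tmul, tmul_sum, ← smul_tmul', tmul_smul]
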